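/- Let ξ be a density operator on a finite-dimensional Hilbert space with tr(ξ²) ≥ 1 − γ for some γ ∈ (0,1). Then there exists a pure state |ψ⟩ such that the trace distance satisfies D(ξ, |ψ⟩⟨ψ|) ≤ γ. -/

import Mathlib

/-!
Diagonalise `ξ = U diag(λ) U*` and let `ψ` be an eigenvector for a largest eigenvalue `λᵢ`. Then
`ξ - |ψ⟩⟨ψ| = U diag(λ - eᵢ) U*` has trace norm `(1 - λᵢ) + ∑_{j ≠ i} λⱼ = 2 (1 - λᵢ)`, so the trace
distance is `1 - λᵢ`; and purity gives `1 - γ ≤ tr ξ² = ∑ λⱼ² ≤ λᵢ ∑ λⱼ = λᵢ`.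
-/

open Matrix
open scoped ComplexOrder

/-- The trace norm `‖A‖₁ = tr √(A†A)` of a complex matrix. -/
noncomputable def traceNorm {m : Type*} [Fintype m] [DecidableEq m]
    (A : Matrix m m ℂ) : ℝ :=
  (((Matrix.posSemidef_conjTranspose_mul_self A).1.eigenvectorUnitary.1 *
    diagonal (((↑) : ℝ → ℂ) ∘ (√·) ∘ (Matrix.posSemidef_conjTranspose_mul_self A).1.eigenvalues) *
    (star (Matrix.posSemidef_conjTranspose_mul_self A).1.eigenvectorUnitary :
      Matrix m m ℂ)).trace).re

/-- The trace distance `D(ρ, σ) = ½‖ρ − σ‖₁`. -/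
noncomputable def traceDist {m : Type*} [Fintype m] [DecidableEq m]
    (A B : Matrix m m ℂ) : ℝ := traceNorm (A - B) / 2

open Unitary

section Real

variable {ι : Type*} [Fintype ι] {p : ι → ℝ}

lemma sum_sq_le_of_forall_le (hp : ∀ j, 0 ≤ p j) (hsum : ∑ j, p j = 1) {i : ι}
    (hmax : ∀ j, p j ≤ p i) : ∑ j, p j ^ 2 ≤ p i :=
  calc ∑ j, p j ^ 2 ≤ ∑ j, p i * p j :=
        Finset.sum_le_sum fun j _ => by rw [sq]; exact mul_le_mul_of_nonneg_right (hmax j) (hp j)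
    _ = p i := by rw [← Finset.mul_sum, hsum, mul_one]

lemma sum_abs_sub_single_one [DecidableEq ι] (hp : ∀ j, 0 ≤ p j) (hsum : ∑ j, p j = 1)
    (i : ι) :
    ∑ j, |p j - (Pi.single i 1 : ι → ℝ) j| = 2 * (1 - p i) := by
  have hrest : ∑ j ∈ Finset.univ.erase i, p j = 1 - p i := by
    rw [← hsum, ← Finset.add_sum_erase _ _ (Finset.mem_univ i), add_sub_cancel_left]
  have hle : p i ≤ 1 := sub_nonneg.mp (hrest ▸ Finset.sum_nonneg fun j _ => hp j)
  rw [← Finset.add_sum_erase _ _ (Finset.mem_univ i), Pi.single_eq_same,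
    Finset.sum_congr rfl fun j hj => by
      rw [Pi.single_eq_of_ne (Finset.ne_of_mem_erase hj), sub_zero, abs_of_nonneg (hp j)],
    hrest, abs_of_nonpos (by linarith), neg_sub]
  ring

end Real

section Unitary

variable {m R : Type*} [Fintype m] [DecidableEq m] [CommRing R] [StarRing R]

lemma trace_conjStarAlgAut (U : unitaryGroup m R) (A : Matrix m m R) :
    (conjStarAlgAut R _ U A).trace = A.trace := by
  rw [conjStarAlgAut_apply, trace_mul_cycle, Unitary.coe_star_mul_self, one_mul]

lemma conjStarAlgAut_diagonal_single_one (U : unitaryGroup m R) (i : m) :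
    conjStarAlgAut R _ U (diagonal (Pi.single i 1)) =
      vecMulVec ((U : Matrix m m R) *ᵥ Pi.single i 1)
        (star ((U : Matrix m m R) *ᵥ Pi.single i 1)) := by
  rw [conjStarAlgAut_apply, diagonal_single, single_eq_single_vecMulVec_single, mul_vecMulVec,
    vecMulVec_mul, star_mulVec, Pi.star_single, star_one, star_eq_conjTranspose]

end Unitary

open scoped MatrixOrder in
lemma traceNorm_eq_re_trace_sqrt {m : Type*} [Fintype m] [DecidableEq m] (A : Matrix m m ℂ) :
    traceNorm A = (CFC.sqrt (Aᴴ * A)).trace.re := by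
  have hA := posSemidef_conjTranspose_mul_self A
  rw [CFC.sqrt_eq_real_sqrt _ hA.nonneg, cfcₙ_eq_cfc, hA.1.cfc_eq]
  -- `traceNorm` is `IsHermitian.cfc Real.sqrt` unfolded
  rfl

open scoped MatrixOrder in
lemma traceNorm_conjStarAlgAut_diagonal {m : Type*} [Fintype m] [DecidableEq m]
    (U : unitaryGroup m ℂ) (d : m → ℝ) :
    traceNorm (conjStarAlgAut ℂ _ U (diagonal (RCLike.ofReal ∘ d))) = ∑ i, |d i| := by
  set A := conjStarAlgAut ℂ _ U (diagonal (RCLike.ofReal ∘ d))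
  set B := conjStarAlgAut ℂ _ U (diagonal (RCLike.ofReal ∘ fun i => |d i|))
  have hB : 0 ≤ B := star_right_conjugate_nonneg
    (posSemidef_diagonal_iff.mpr fun i => by simp [abs_nonneg]).nonneg _
  have hA : Aᴴ = A := by
    rw [← star_eq_conjTranspose, ← map_star, star_eq_conjTranspose, diagonal_conjTranspose]
    simp [A, Function.comp_def, Pi.star_def]
  have hB2 : B ^ 2 = Aᴴ * A := by
    rw [hA, sq, ← map_mul, ← map_mul, diagonal_mul_diagonal, diagonal_mul_diagonal]
    simp [← Complex.ofReal_mul, abs_mul_abs_self]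
  rw [traceNorm_eq_re_trace_sqrt, ← hB2, CFC.sqrt_sq B, trace_conjStarAlgAut, trace_diagonal]
  simp

namespace Matrix.IsHermitian

variable {m 𝕜 : Type*} [Fintype m] [DecidableEq m] [RCLike 𝕜] {A : Matrix m m 𝕜}

lemma sum_eigenvalues_eq_one (hA : A.IsHermitian) (h : A.trace = 1) :
    ∑ i, hA.eigenvalues i = 1 := by
  exact_mod_cast hA.trace_eq_sum_eigenvalues.symm.trans h

lemma re_trace_mul_self (hA : A.IsHermitian) :
    RCLike.re (A * A).trace = ∑ i, hA.eigenvalues i ^ 2 := by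
  conv_lhs => rw [hA.spectral_theorem]
  rw [← map_mul, trace_conjStarAlgAut, diagonal_mul_diagonal, trace_diagonal]
  simp [sq]

lemma vecMulVec_eigenvectorBasis (hA : A.IsHermitian) (i : m) :
    vecMulVec ⇑(hA.eigenvectorBasis i) (star ⇑(hA.eigenvectorBasis i)) =
      conjStarAlgAut 𝕜 _ hA.eigenvectorUnitary (diagonal (Pi.single i 1)) := by
  rw [conjStarAlgAut_diagonal_single_one, eigenvectorUnitary_mulVec]

end Matrix.IsHermitian

lemma Matrix.PosSemidef.traceDist_vecMulVec_eigenvectorBasis {m : Type*} [Fintype m]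
    [DecidableEq m] {A : Matrix m m ℂ} (hA : A.PosSemidef) (htr : A.trace = 1) (i : m) :
    traceDist A (vecMulVec ⇑(hA.1.eigenvectorBasis i) (star ⇑(hA.1.eigenvectorBasis i))) =
      1 - hA.1.eigenvalues i := by
  have hsub : A - vecMulVec ⇑(hA.1.eigenvectorBasis i) (star ⇑(hA.1.eigenvectorBasis i)) =
      conjStarAlgAut ℂ _ hA.1.eigenvectorUnitary
        (diagonal (RCLike.ofReal ∘ (hA.1.eigenvalues - Pi.single i 1))) := by
    nth_rewrite 1 [hA.1.spectral_theorem]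
    rw [hA.1.vecMulVec_eigenvectorBasis, ← map_sub, diagonal_sub]
    congr 2
    ext j
    by_cases hj : j = i <;> simp [hj]
  rw [traceDist, hsub, traceNorm_conjStarAlgAut_diagonal]
  simp only [Pi.sub_apply]
  rw [sum_abs_sub_single_one hA.eigenvalues_nonneg (hA.1.sum_eigenvalues_eq_one htr)]
  ring

theorem stmt17_general {n : ℕ} (ξ : Matrix (Fin n) (Fin n) ℂ)
    (hξ : ξ.PosSemidef) (hξ1 : ξ.trace = 1)
    (γ : ℝ)
    (hpur : 1 - γ ≤ ((ξ * ξ).trace).re) :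
    ∃ ψ : EuclideanSpace ℂ (Fin n), ‖ψ‖ = 1 ∧
      traceDist ξ (Matrix.vecMulVec (ψ : Fin n → ℂ) (star (ψ : Fin n → ℂ))) ≤ γ := by
  have hsum := hξ.1.sum_eigenvalues_eq_one hξ1
  obtain ⟨i, -, hmax⟩ := Finset.univ.exists_max_image hξ.1.eigenvalues
    (Finset.nonempty_of_sum_ne_zero (hsum ▸ one_ne_zero))
  refine ⟨hξ.1.eigenvectorBasis i, hξ.1.eigenvectorBasis.orthonormal.1 i, ?_⟩
  have hsq := sum_sq_le_of_forall_le hξ.eigenvalues_nonneg hsum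
    fun j => hmax j (Finset.mem_univ j)
  have htr2 : (ξ * ξ).trace.re = ∑ j, hξ.1.eigenvalues j ^ 2 := hξ.1.re_trace_mul_self
  rw [hξ.traceDist_vecMulVec_eigenvectorBasis hξ1]
  linarith

/-- If `ξ` is a density operator with `tr(ξ²) ≥ 1 − γ` for some
`γ ∈ (0,1)`, then there is a pure state `|ψ⟩` with `D(ξ, |ψ⟩⟨ψ|) ≤ γ`. -/
theorem stmt17 {n : ℕ} (ξ : Matrix (Fin n) (Fin n) ℂ)
    (hξ : ξ.PosSemidef) (hξ1 : ξ.trace = 1)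
    (γ : ℝ) (hγ : γ ∈ Set.Ioo (0 : ℝ) 1)
    (hpur : 1 - γ ≤ ((ξ * ξ).trace).re) :
    ∃ ψ : EuclideanSpace ℂ (Fin n), ‖ψ‖ = 1 ∧
      traceDist ξ (Matrix.vecMulVec (ψ : Fin n → ℂ) (star (ψ : Fin n → ℂ))) ≤ γ :=
  stmt17_general ξ hξ hξ1 γ hpur
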